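/- arXiv:1509.06056 — 4 statements merged into one kernel-verified Lean document; each statement's English description precedes it below -/
import Mathlib

section
/- Define meromorphic-type integrals I₁(k) = ∫₀^{2π} (k sin² φ)/√(1 - k² cos² φ) dφ and I₂(k) = ∫₀^{2π} √(1 - k² cos² φ) dφ for 0 < k < 1 (real). Then for 0 < k < 1, I₁ and I₂ are the derivatives ∂𝔥/∂z₁ and ∂𝔥/∂z₂ (up to factor 1/π²) where 𝔥(z₁,z₂) = (1/(2π)²) ∫₀^{2π}∫₀^{2π} |z₁ cos φ₁ + z₂ cos φ₂| dφ₁ dφ₂ evaluated at z₁ = k, z₂ = 1. Precisely: π² ∂𝔥/∂z₁ (k,1) = I₁(k) and π² ∂𝔥/∂z₂ (k,1) = I₂(k) for 0 < k < 1. -/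
/-!
Integrating out φ₂ first gives ∫₀^{2π} |cos φ₂ + b| dφ₂ = 4√(1 - b²) + 4b arcsin b for |b| ≤ 1
(split the circle at the zeros ±arccos(-b) of the integrand), so for |t| ≤ 1,
𝔥(t,1) = (2π)⁻² ∫₀^{2π} F(t cos φ) dφ with F(b) = 4√(1 - b²) + 4b arcsin b.
Since F' = 4 arcsin is bounded, one may differentiate under the integral sign; integrating
∫ cos φ · arcsin(k cos φ) by parts then gives ∂₁𝔥(k,1) = I₁(k)/π².
Finally 𝔥 is positively homogeneous of degree one, so Euler's relation
∂₂𝔥(k,1) = 𝔥(k,1) - k ∂₁𝔥(k,1) turns the closed form of 𝔥(k,1) into I₂(k)/π².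
-/

open Real MeasureTheory

/-- The support-function kernel 𝔥(z₁,z₂) = (2π)⁻² ∫₀^{2π}∫₀^{2π} |z₁cos φ₁ + z₂cos φ₂|. -/
noncomputable def frakH (z₁ z₂ : ℝ) : ℝ :=
  (2 * π)⁻¹ ^ 2 *
    ∫ φ₁ in (0:ℝ)..(2 * π), ∫ φ₂ in (0:ℝ)..(2 * π),
      |z₁ * Real.cos φ₁ + z₂ * Real.cos φ₂|

noncomputable def I₁ (k : ℝ) : ℝ :=
  ∫ φ in (0:ℝ)..(2 * π), k * Real.sin φ ^ 2 / Real.sqrt (1 - k ^ 2 * Real.cos φ ^ 2)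

noncomputable def I₂ (k : ℝ) : ℝ :=
  ∫ φ in (0:ℝ)..(2 * π), Real.sqrt (1 - k ^ 2 * Real.cos φ ^ 2)

open intervalIntegral Filter Topology

noncomputable def integralAbsCosAdd (b : ℝ) : ℝ :=
  4 * √(1 - b ^ 2) + 4 * b * arcsin b

theorem integral_cos_add (b u v : ℝ) :
    ∫ φ in u..v, (cos φ + b) = sin v - sin u + b * (v - u) := by
  simp [intervalIntegral.integral_add, intervalIntegrable_const]
  ring

theorem integral_abs_cos_add {b : ℝ} (hb : |b| ≤ 1) :
    ∫ φ in (0:ℝ)..(2 * π), |cos φ + b| = integralAbsCosAdd b := by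
  obtain ⟨hb₁, hb₂⟩ := abs_le.mp hb
  have hsin : sin (arccos (-b)) = √(1 - b ^ 2) := by rw [sin_arccos, neg_sq]
  have hc : arccos (-b) = π / 2 + arcsin b := by
    rw [arccos_neg, arccos_eq_pi_div_two_sub_arcsin]; ring
  set c := arccos (-b)
  -- `c` and `2π - c` are the zeros of `cos φ + b` in `[0, 2π]`.
  have hc₀ : 0 ≤ c := arccos_nonneg _
  have hcπ : c ≤ π := arccos_le_pi _
  have hcos : cos c = -b := cos_arccos (by linarith) (by linarith)
  have hint : ∀ u v : ℝ, IntervalIntegrable (fun φ => |cos φ + b|) volume u v :=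
    (Continuous.intervalIntegrable (by fun_prop))
  have h₁ : ∫ φ in (0:ℝ)..c, |cos φ + b| = ∫ φ in (0:ℝ)..c, (cos φ + b) := by
    refine integral_congr fun φ hφ => abs_of_nonneg ?_
    rw [Set.uIcc_of_le hc₀] at hφ
    linarith [cos_le_cos_of_nonneg_of_le_pi hφ.1 hcπ hφ.2]
  have h₂ : ∫ φ in c..(2 * π - c), |cos φ + b| =
      ∫ φ in c..(2 * π - c), -(cos φ + b) := by
    refine integral_congr fun φ hφ => abs_of_nonpos ?_
    obtain ⟨hφ₁, hφ₂⟩ := Set.uIcc_of_le (by linarith : c ≤ 2 * π - c) ▸ hφ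
    rcases le_total φ π with h | h
    · linarith [cos_le_cos_of_nonneg_of_le_pi hc₀ h hφ₁]
    · linarith [cos_two_pi_sub φ ▸
        cos_le_cos_of_nonneg_of_le_pi hc₀ (by linarith : 2 * π - φ ≤ π) (by linarith)]
  have h₃ : ∫ φ in (2 * π - c)..(2 * π), |cos φ + b| =
      ∫ φ in (2 * π - c)..(2 * π), (cos φ + b) := by
    refine integral_congr fun φ hφ => abs_of_nonneg ?_
    obtain ⟨hφ₁, hφ₂⟩ := Set.uIcc_of_le (by linarith : 2 * π - c ≤ 2 * π) ▸ hφ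
    linarith [cos_two_pi_sub φ ▸
      cos_le_cos_of_nonneg_of_le_pi (by linarith : 0 ≤ 2 * π - φ) hcπ (by linarith)]
  rw [← integral_add_adjacent_intervals (hint _ _) (hint _ _),
    ← integral_add_adjacent_intervals (hint _ _) (hint _ _), h₁, h₂, h₃,
    intervalIntegral.integral_neg, integral_cos_add, integral_cos_add, integral_cos_add, sin_two_pi_sub, sin_two_pi, sin_zero,
    hsin, integralAbsCosAdd, hc]
  ring

theorem hasDerivAt_integralAbsCosAdd {b : ℝ} (hb : |b| < 1) :
    HasDerivAt integralAbsCosAdd (4 * arcsin b) b := by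
  have hpos : 0 < 1 - b ^ 2 := sub_pos.mpr ((sq_lt_one_iff_abs_lt_one b).mpr hb)
  obtain ⟨hb₁, hb₂⟩ := abs_lt.mp hb
  have hsqrt := ((hasDerivAt_pow 2 b).const_sub 1).sqrt hpos.ne'
  have harcsin := hasDerivAt_arcsin hb₁.ne' hb₂.ne
  refine ((hsqrt.const_mul 4).add (((hasDerivAt_id' b).const_mul 4).mul harcsin)).congr_deriv ?_
  have := sq_sqrt hpos.le
  push_cast
  field_simp
  ring

theorem abs_mul_cos_le_abs (x φ : ℝ) : |x * cos φ| ≤ |x| := by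
  rw [abs_mul]; exact mul_le_of_le_one_right (abs_nonneg x) (abs_cos_le_one φ)

theorem hasDerivAt_integral_comp_mul_cos {F F' : ℝ → ℝ} {C t a b : ℝ}
    (hF : Continuous F) (hF' : Continuous F') (hF'_le : ∀ x, |F' x| ≤ C)
    (hderiv : ∀ x, |x| < 1 → HasDerivAt F (F' x) x) (ht : |t| < 1) :
    HasDerivAt (fun s => ∫ φ in a..b, F (s * cos φ))
      (∫ φ in a..b, F' (t * cos φ) * cos φ) t := by
  refine (hasDerivAt_integral_of_dominated_loc_of_deriv_le (F := fun s φ => F (s * cos φ))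
    (F' := fun s φ => F' (s * cos φ) * cos φ) (bound := fun _ => C)
    ((isOpen_lt continuous_abs continuous_const).mem_nhds ht)
    (Eventually.of_forall fun x => (hF.comp (by fun_prop)).aestronglyMeasurable)
    ((hF.comp (by fun_prop)).intervalIntegrable _ _)
    ((hF'.comp (by fun_prop)).mul continuous_cos).aestronglyMeasurable
    (ae_of_all _ fun φ _ x _ => ?_) intervalIntegrable_const
    (ae_of_all _ fun φ _ x hx => ?_)).2
  · rw [norm_mul, Real.norm_eq_abs, Real.norm_eq_abs]
    exact (mul_le_of_le_one_right (abs_nonneg _) (abs_cos_le_one φ)).trans (hF'_le _)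
  · exact (hderiv _ ((abs_mul_cos_le_abs x φ).trans_lt hx)).comp x (hasDerivAt_mul_const _)

theorem frakH_eq_integral {t : ℝ} (ht : |t| ≤ 1) :
    frakH t 1 = (2 * π)⁻¹ ^ 2 * ∫ φ in (0:ℝ)..(2 * π), integralAbsCosAdd (t * cos φ) := by
  rw [frakH]
  congr 1
  refine integral_congr fun φ _ => ?_
  simp only [one_mul, add_comm (t * cos φ)]
  exact integral_abs_cos_add ((abs_mul_cos_le_abs t φ).trans ht)

theorem integral_arcsin_mul_cos_mul_cos {k : ℝ} (hk : |k| < 1) :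
    ∫ φ in (0:ℝ)..(2 * π), arcsin (k * cos φ) * cos φ = I₁ k := by
  have hpos : ∀ φ, 0 < 1 - (k * cos φ) ^ 2 := fun φ =>
    sub_pos.mpr ((sq_lt_one_iff_abs_lt_one _).mpr ((abs_mul_cos_le_abs k φ).trans_lt hk))
  have hu : ∀ φ, HasDerivAt (fun ψ => arcsin (k * cos ψ))
      (1 / √(1 - (k * cos φ) ^ 2) * (k * -sin φ)) φ := fun φ => by
    obtain ⟨h₁, h₂⟩ := abs_lt.mp ((abs_mul_cos_le_abs k φ).trans_lt hk)
    exact (hasDerivAt_arcsin h₁.ne' h₂.ne).comp φ ((hasDerivAt_cos φ).const_mul k)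
  have hu' : Continuous fun φ => 1 / √(1 - (k * cos φ) ^ 2) * (k * -sin φ) :=
    (continuous_const.div (by fun_prop) fun φ => (sqrt_pos.mpr (hpos φ)).ne').mul (by fun_prop)
  rw [integral_mul_deriv_eq_deriv_mul (fun φ _ => hu φ) (fun φ _ => hasDerivAt_sin φ)
    (hu'.intervalIntegrable _ _) (continuous_cos.intervalIntegrable _ _), sin_two_pi, sin_zero,
    mul_zero, mul_zero, sub_zero, zero_sub, I₁, ← intervalIntegral.integral_neg]
  refine integral_congr fun φ _ => ?_
  rw [mul_pow]
  field_simp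

theorem integral_integralAbsCosAdd_mul_cos (k : ℝ) :
    ∫ φ in (0:ℝ)..(2 * π), integralAbsCosAdd (k * cos φ) =
      4 * I₂ k + 4 * k * ∫ φ in (0:ℝ)..(2 * π), arcsin (k * cos φ) * cos φ := by
  simp only [integralAbsCosAdd, I₂]
  rw [intervalIntegral.integral_add (Continuous.intervalIntegrable (by fun_prop) _ _)
    (Continuous.intervalIntegrable (by fun_prop) _ _), ← intervalIntegral.integral_const_mul,
    ← intervalIntegral.integral_const_mul]
  congr 1 <;> refine integral_congr fun φ _ => ?_
  · rw [mul_pow]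
  · ring

theorem frakH_eq_I₂_add_mul_I₁ {k : ℝ} (hk : |k| < 1) :
    frakH k 1 = (I₂ k + k * I₁ k) / π ^ 2 := by
  rw [frakH_eq_integral hk.le, integral_integralAbsCosAdd_mul_cos,
    integral_arcsin_mul_cos_mul_cos hk]
  field_simp
  ring

theorem hasDerivAt_frakH_left {k : ℝ} (hk : |k| < 1) :
    HasDerivAt (fun t => frakH t 1) (I₁ k / π ^ 2) k := by
  have hbound : ∀ x, |4 * arcsin x| ≤ 2 * π := fun x => by
    rw [abs_le]
    constructor <;> linarith [neg_pi_div_two_le_arcsin x, arcsin_le_pi_div_two x]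
  have hF := hasDerivAt_integral_comp_mul_cos (a := 0) (b := 2 * π)
    (by unfold integralAbsCosAdd; fun_prop) (by fun_prop) hbound
    (fun x hx => hasDerivAt_integralAbsCosAdd hx) hk
  have heq : (fun t => frakH t 1) =ᶠ[𝓝 k]
      fun t => (2 * π)⁻¹ ^ 2 * ∫ φ in (0:ℝ)..(2 * π), integralAbsCosAdd (t * cos φ) := by
    filter_upwards [(continuous_abs.tendsto k).eventually (gt_mem_nhds hk)] with t ht
    exact frakH_eq_integral ht.le
  refine ((hF.const_mul _).congr_of_eventuallyEq heq).congr_deriv ?_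
  simp only [mul_assoc, intervalIntegral.integral_const_mul, integral_arcsin_mul_cos_mul_cos hk]
  field_simp
  ring

theorem frakH_mul_mul {c : ℝ} (hc : 0 ≤ c) (z₁ z₂ : ℝ) :
    frakH (c * z₁) (c * z₂) = c * frakH z₁ z₂ := by
  simp only [frakH, mul_assoc, ← mul_add, abs_mul, abs_of_nonneg hc,
    intervalIntegral.integral_const_mul]
  ring

theorem HasDerivAt.snd_of_homogeneous {f : ℝ → ℝ → ℝ} {k d : ℝ}
    (hf : ∀ c x y, 0 < c → f (c * x) (c * y) = c * f x y)
    (hd : HasDerivAt (fun t => f t 1) d k) :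
    HasDerivAt (fun t => f k t) (f k 1 - k * d) 1 := by
  have hinv : HasDerivAt (fun t : ℝ => k / t) (-k) 1 := by
    simpa [div_eq_mul_inv] using (hasDerivAt_inv one_ne_zero).const_mul k
  have hcomp : HasDerivAt (fun t => f (k / t) 1) (d * -k) 1 :=
    (show HasDerivAt (fun t => f t 1) d (k / 1) by rwa [div_one]).comp 1 hinv
  have heq : (fun t => f k t) =ᶠ[𝓝 1] fun t => t * f (k / t) 1 := by
    filter_upwards [lt_mem_nhds one_pos] with t ht
    rw [← hf t _ _ ht, mul_div_cancel₀ _ ht.ne', mul_one]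
  refine (((hasDerivAt_id' 1).mul hcomp).congr_of_eventuallyEq heq).congr_deriv ?_
  simp only [div_one]
  ring

theorem partials_of_support_function (k : ℝ) (hk0 : 0 < k) (hk1 : k < 1) :
    HasDerivAt (fun t => frakH t 1) (I₁ k / π ^ 2) k ∧
    HasDerivAt (fun t => frakH k t) (I₂ k / π ^ 2) 1 := by
  have hk : |k| < 1 := abs_lt.mpr ⟨by linarith, hk1⟩
  have h₁ := hasDerivAt_frakH_left hk
  refine ⟨h₁, ?_⟩
  have h₂ := h₁.snd_of_homogeneous fun c x y hc => frakH_mul_mul hc.le x y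
  rwa [frakH_eq_I₂_add_mul_I₁ hk, add_div, mul_div_assoc, add_sub_cancel_right] at h₂
end

section
/- For N ≥ 1 let 𝔮 be the N×N matrix 𝔮ᵢⱼ = 1/((i+j)(i+j-1)) and 𝔔 = 𝔮⁻¹. Then every entry of 𝔔 is an even integer. -/
/-!
`𝔮` is the Gram matrix of the monomials `xⁱ` for the weight `(1 - x) dx` on `[0, 1]`.
Orthogonalising them gives the shifted Jacobi polynomials
`pₙ(x) = ∑ₖ (-1)^(n+k) C(n,k) C(n+k+1,n+1) xᵏ`, whose coefficient matrix `A` is integral and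
lower triangular with `A 𝔮 Aᵀ = diag (1 / (2(n+1)))`; hence `𝔔 = Aᵀ diag (2(n+1)) A`.
Orthogonality and the norms come from two finite-difference facts: `∑ₖ (-1)ᵏ C(n,k) P(k) = 0`
when `deg P < n`, and the partial fraction expansion
`∑ₖ (-1)ᵏ C(n,k) P(k) / (z+k) = P(-z) n! / (z(z+1)⋯(z+n))` when `deg P ≤ n`.
-/

open Finset Polynomial Nat

theorem sum_range_neg_one_pow_mul_choose_mul_eq_fwdDiff_iter {R : Type*} [CommRing R]
    (f : R → R) (n : ℕ) (y : R) :
    ∑ k ∈ range (n + 1), (-1 : R) ^ k * n.choose k * f (y + k) =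
      (-1) ^ n * (fwdDiff 1)^[n] f y := by
  rw [fwdDiff_iter_eq_sum_shift, mul_sum]
  refine sum_congr rfl fun k hk => ?_
  have hkn : k ≤ n := Nat.lt_succ_iff.mp (mem_range.mp hk)
  have hsign : (-1 : R) ^ n * (-1) ^ (n - k) = (-1) ^ k := by
    rw [← pow_add, show n + (n - k) = k + 2 * (n - k) by omega, pow_add, pow_mul]; simp
  simp only [zsmul_eq_mul, nsmul_one, Int.cast_mul, Int.cast_pow, Int.cast_neg, Int.cast_one,
    Int.cast_natCast]
  rw [← hsign]; ring

theorem Polynomial.sum_range_neg_one_pow_mul_choose_mul_eval_eq_zero {R : Type*} [CommRing R]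
    {P : R[X]} {n : ℕ} (hP : P.degree < n) :
    ∑ k ∈ range (n + 1), (-1 : R) ^ k * n.choose k * P.eval (k : R) = 0 := by
  rcases eq_or_ne P 0 with rfl | hP0
  · simp
  have h := sum_range_neg_one_pow_mul_choose_mul_eq_fwdDiff_iter P.eval n 0
  simp only [zero_add] at h
  rw [h, Polynomial.fwdDiff_iter_eq_zero_of_degree_lt ((natDegree_lt_iff_degree_lt hP0).mpr hP),
    Pi.zero_apply, mul_zero]

theorem fwdDiff_iter_inv {K : Type*} [Field K] (n : ℕ) {z : K}
    (hz : (ascPochhammer K (n + 1)).eval z ≠ 0) :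
    (fwdDiff 1)^[n] (fun y : K => y⁻¹) z = (-1) ^ n * n ! / (ascPochhammer K (n + 1)).eval z := by
  induction n generalizing z with
  | zero => simp
  | succ n ih =>
    have hleft :
        (ascPochhammer K (n + 2)).eval z = z * (ascPochhammer K (n + 1)).eval (z + 1) := by
      rw [ascPochhammer_succ_left, eval_mul, eval_X, eval_comp]; simp
    have hright :
        (ascPochhammer K (n + 2)).eval z = (ascPochhammer K (n + 1)).eval z * (z + (n + 1)) := by
      rw [ascPochhammer_succ_eval]; push_cast; ring
    have h1 : (ascPochhammer K (n + 1)).eval (z + 1) ≠ 0 :=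
      fun h => hz (by rw [hleft, h, mul_zero])
    have h0 : (ascPochhammer K (n + 1)).eval z ≠ 0 := fun h => hz (by rw [hright, h, zero_mul])
    have hz0 : z ≠ 0 := fun h => hz (by rw [hleft, h, zero_mul])
    have hzn : z + (n + 1) ≠ 0 := fun h => hz (by rw [hright, h, mul_zero])
    rw [Function.iterate_succ_apply', fwdDiff, ih h1, ih h0, hright]
    rw [div_sub_div _ _ h1 h0, div_eq_div_iff (mul_ne_zero h1 h0) (mul_ne_zero h0 hzn)]
    have := hleft.symm.trans hright
    push_cast [Nat.factorial_succ]
    linear_combination -(-1) ^ n * n ! * (ascPochhammer K (n + 1)).eval z * this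

theorem sum_range_neg_one_pow_mul_choose_div_add {K : Type*} [Field K] (n : ℕ) {z : K}
    (hz : (ascPochhammer K (n + 1)).eval z ≠ 0) :
    ∑ k ∈ range (n + 1), (-1 : K) ^ k * n.choose k / (z + k) =
      n ! / (ascPochhammer K (n + 1)).eval z := by
  have h := sum_range_neg_one_pow_mul_choose_mul_eq_fwdDiff_iter (fun y : K => y⁻¹) n z
  simp only [← div_eq_mul_inv] at h
  rw [h, fwdDiff_iter_inv n hz, ← mul_div_assoc, ← mul_assoc, ← pow_add, ← two_mul, pow_mul]
  simp

theorem add_natCast_ne_zero_of_ascPochhammer_eval_ne_zero {K : Type*} [Field K] {n k : ℕ}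
    {z : K} (hz : (ascPochhammer K n).eval z ≠ 0) (hk : k < n) : z + k ≠ 0 := by
  intro h
  rw [eq_neg_of_add_eq_zero_left h, ascPochhammer_eval_neg_coe_nat_of_lt hk] at hz
  exact hz rfl

theorem Polynomial.sum_range_neg_one_pow_mul_choose_mul_eval_div_add {K : Type*} [Field K]
    {P : K[X]} {n : ℕ} (hP : P.degree ≤ n) {z : K} (hz : (ascPochhammer K (n + 1)).eval z ≠ 0) :
    ∑ k ∈ range (n + 1), (-1 : K) ^ k * n.choose k * P.eval (k : K) / (z + k) =
      P.eval (-z) * n ! / (ascPochhammer K (n + 1)).eval z := by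
  rcases eq_or_ne P 0 with rfl | hP0
  · simp
  set Q := P /ₘ (X - C (-z))
  have hdiv : P = C (P.eval (-z)) + (X - C (-z)) * Q := by
    rw [← modByMonic_X_sub_C_eq_C_eval, modByMonic_add_div]
  have hQ : Q.degree < n := (degree_divByMonic_lt P _ hP0
    (by rw [degree_X_sub_C]; exact zero_lt_one)).trans_le hP
  have hterm : ∀ k ∈ range (n + 1), (-1 : K) ^ k * n.choose k * P.eval (k : K) / (z + k) =
      (-1) ^ k * n.choose k * Q.eval (k : K) + P.eval (-z) * ((-1) ^ k * n.choose k / (z + k)) := by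
    intro k hk
    have hzk := add_natCast_ne_zero_of_ascPochhammer_eval_ne_zero hz (mem_range.mp hk)
    conv_lhs => rw [hdiv]
    simp only [eval_add, eval_C, eval_mul, eval_sub, eval_X]
    field_simp
    ring
  rw [sum_congr rfl hterm, sum_add_distrib, sum_range_neg_one_pow_mul_choose_mul_eval_eq_zero hQ,
    ← mul_sum, sum_range_neg_one_pow_mul_choose_div_add n hz, zero_add, mul_div_assoc]

theorem ascPochhammer_eval_add_add_two {S : Type*} [CommSemiring S] (i m : ℕ) (y : S) :
    (ascPochhammer S (i + m + 2)).eval y =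
      (ascPochhammer S i).eval y * (y + i) * (y + i + 1) *
        (ascPochhammer S m).eval (y + i + 2) := by
  have h := congrArg (eval y) (ascPochhammer_mul S (i + 2) m)
  rw [show i + 2 + m = i + m + 2 by ring] at h
  rw [← h, eval_mul, eval_comp, ascPochhammer_succ_eval, ascPochhammer_succ_eval]
  simp only [eval_add, eval_X, eval_natCast]
  push_cast
  simp only [← add_assoc]

theorem Matrix.inv_eq_of_mul_mul_eq_diagonal {ι K : Type*} [Fintype ι] [DecidableEq ι] [Field K]
    {A M B : Matrix ι ι K} {d : ι → K} (hA : IsUnit A.det) (hd : ∀ i, d i ≠ 0)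
    (h : A * M * B = Matrix.diagonal d) : M⁻¹ = B * Matrix.diagonal d⁻¹ * A := by
  refine Matrix.inv_eq_right_inv ?_
  have hdd : Matrix.diagonal d * Matrix.diagonal d⁻¹ = 1 := by
    rw [Matrix.diagonal_mul_diagonal, ← Matrix.diagonal_one]
    exact congrArg Matrix.diagonal (funext fun i => mul_inv_cancel₀ (hd i))
  calc M * (B * Matrix.diagonal d⁻¹ * A)
      = A⁻¹ * (A * M * B) * Matrix.diagonal d⁻¹ * A := by
        simp only [Matrix.mul_assoc, Matrix.nonsing_inv_mul_cancel_left _ _ hA]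
    _ = 1 := by
        rw [h, Matrix.mul_assoc A⁻¹, hdd, Matrix.mul_one, Matrix.nonsing_inv_mul _ hA]

theorem Matrix.IsUpperTriangular.isDiag_of_isSymm {ι R : Type*} [LinearOrder ι] [Zero R]
    {M : Matrix ι ι R} (hU : M.IsUpperTriangular) (hS : M.IsSymm) : M.IsDiag := by
  intro i j hij
  rcases hij.lt_or_gt with h | h
  · rw [← hS.apply, hU h]
  · exact hU h

-- the coefficient of `xᵏ` in the shifted Jacobi polynomial `pₙ`
def jacobiCoeff (n k : ℕ) : ℤ := (-1) ^ (n + k) * n.choose k * (n + k + 1).choose (n + 1)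

theorem jacobiCoeff_eq_zero_of_lt {n k : ℕ} (h : n < k) : jacobiCoeff n k = 0 := by
  simp [jacobiCoeff, Nat.choose_eq_zero_of_lt h]

theorem jacobiCoeff_self (n : ℕ) : jacobiCoeff n n = (2 * n + 1).choose (n + 1) := by
  simp [jacobiCoeff, ← two_mul, pow_mul]

theorem jacobiCoeff_eq_ascPochhammer (n k : ℕ) :
    (jacobiCoeff n k : ℝ) =
      (-1) ^ n / (n + 1)! *
        ((-1) ^ k * n.choose k * (ascPochhammer ℝ (n + 1)).eval (k + 1 : ℝ)) := by
  have h := ascPochhammer_nat_eq_natCast_ascFactorial ℝ (k + 1) (n + 1)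
  rw [ascFactorial_eq_factorial_mul_choose, show k + (n + 1) = n + k + 1 by ring] at h
  push_cast at h
  rw [h, jacobiCoeff]
  push_cast
  field_simp
  ring

theorem sum_jacobiCoeff_mul_eq_zero_of_lt {n i : ℕ} (hi : i < n) :
    ∑ k ∈ range (n + 1), (jacobiCoeff n k : ℝ) * (1 / ((k + i + 2) * (k + i + 1))) = 0 := by
  obtain ⟨m, rfl⟩ := Nat.exists_eq_add_of_lt hi
  -- both denominators divide `(k + 1)⋯(k + n + 1)`, leaving a polynomial of degree `n - 1` in `k`
  set R : ℝ[X] :=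
    (ascPochhammer ℝ i).comp (X + C 1) * (ascPochhammer ℝ m).comp (X + C (i + 3 : ℝ))
  have hR : R.degree < (i + m + 1 : ℕ) := by
    refine degree_le_natDegree.trans_lt ?_
    have : R.natDegree ≤ i + m := natDegree_mul_le.trans (_root_.add_le_add
      (by rw [natDegree_comp, ascPochhammer_natDegree, natDegree_X_add_C, mul_one])
      (by rw [natDegree_comp, ascPochhammer_natDegree, natDegree_X_add_C, mul_one]))
    exact_mod_cast this.trans_lt (by omega)
  have hterm : ∀ k ∈ range (i + m + 1 + 1),
      (jacobiCoeff (i + m + 1) k : ℝ) * (1 / ((k + i + 2) * (k + i + 1))) =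
        (-1) ^ (i + m + 1) / (i + m + 1 + 1)! *
          ((-1) ^ k * (i + m + 1).choose k * R.eval (k : ℝ)) := by
    intro k _
    rw [jacobiCoeff_eq_ascPochhammer, ascPochhammer_eval_add_add_two]
    simp only [R, eval_mul, eval_comp, eval_add, eval_X, eval_C]
    rw [show (k : ℝ) + 1 + i + 2 = k + (i + 3) by ring]
    field_simp
    ring
  rw [sum_congr rfl hterm, ← mul_sum, sum_range_neg_one_pow_mul_choose_mul_eval_eq_zero hR,
    mul_zero]

theorem sum_jacobiCoeff_mul_self (n : ℕ) :
    ∑ k ∈ range (n + 1), (jacobiCoeff n k : ℝ) * (1 / ((k + n + 2) * (k + n + 1))) =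
      n ! / (ascPochhammer ℝ (n + 1)).eval (n + 2 : ℝ) := by
  set P : ℝ[X] := (ascPochhammer ℝ n).comp (X + C 1)
  have hP : P.degree ≤ n := by
    refine degree_le_natDegree.trans ?_
    rw [natDegree_comp, ascPochhammer_natDegree, natDegree_X_add_C, mul_one]
  have hz : (ascPochhammer ℝ (n + 1)).eval (n + 2 : ℝ) ≠ 0 :=
    (ascPochhammer_pos _ _ (by positivity)).ne'
  have hterm : ∀ k ∈ range (n + 1),
      (jacobiCoeff n k : ℝ) * (1 / ((k + n + 2) * (k + n + 1))) =
        (-1) ^ n / (n + 1)! * ((-1) ^ k * n.choose k * P.eval (k : ℝ) / ((n + 2 : ℝ) + k)) := by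
    intro k _
    rw [jacobiCoeff_eq_ascPochhammer, ascPochhammer_succ_eval]
    simp only [P, eval_comp, eval_add, eval_X, eval_C]
    field_simp
    ring
  have hPz : P.eval (-(n + 2 : ℝ)) = (-1) ^ n * (n + 1)! := by
    have h := Nat.factorial_mul_descFactorial (show n ≤ n + 1 by omega)
    rw [show n + 1 - n = 1 by omega, factorial_one, one_mul] at h
    simp only [P, eval_comp, eval_add, eval_X, eval_C,
      show -((n : ℝ) + 2) + 1 = -((n + 1 : ℕ) : ℝ) by push_cast; ring,
      ascPochhammer_eval_neg_eq_descPochhammer, descPochhammer_eval_eq_descFactorial, h]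
  rw [sum_congr rfl hterm, ← mul_sum, sum_range_neg_one_pow_mul_choose_mul_eval_div_add hP hz,
    hPz]
  field_simp
  rw [← pow_mul, mul_comm, pow_mul, neg_one_sq, one_pow]

theorem jacobiCoeff_self_mul_sum_jacobiCoeff_mul_self (n : ℕ) :
    (jacobiCoeff n n : ℝ) *
      ∑ k ∈ range (n + 1), (jacobiCoeff n k : ℝ) * (1 / ((k + n + 2) * (k + n + 1))) =
      (2 * (n + 1) : ℝ)⁻¹ := by
  have hchoose := Nat.choose_mul_factorial_mul_factorial (show n + 1 ≤ 2 * n + 1 by omega)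
  rw [show 2 * n + 1 - (n + 1) = n by omega] at hchoose
  have hasc := Nat.factorial_mul_ascFactorial (n + 1) (n + 1)
  rw [show n + 1 + (n + 1) = 2 * n + 1 + 1 by omega, Nat.factorial_succ (2 * n + 1),
    ← hchoose] at hasc
  have hP : (ascPochhammer ℝ (n + 1)).eval (n + 2 : ℝ) =
      2 * (n + 1) * (2 * n + 1).choose (n + 1) * n ! := by
    rw [show (n + 2 : ℝ) = (n + 1 + 1 : ℕ) by push_cast; ring,
      ascPochhammer_nat_eq_natCast_ascFactorial]
    have : (n + 1 + 1).ascFactorial (n + 1) = 2 * (n + 1) * (2 * n + 1).choose (n + 1) * n ! :=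
      Nat.eq_of_mul_eq_mul_left (factorial_pos (n + 1)) (by rw [hasc]; ring)
    rw [this]; push_cast; ring
  have hC : ((2 * n + 1).choose (n + 1) : ℝ) ≠ 0 := by
    exact_mod_cast (Nat.choose_pos (by omega)).ne'
  rw [sum_jacobiCoeff_mul_self, jacobiCoeff_self, hP]
  push_cast
  field_simp

open Matrix

-- the entry `(i, j)` is `∫₀¹ x^(i+j) (1 - x) dx`
noncomputable def momentMatrix (N : ℕ) : Matrix (Fin N) (Fin N) ℝ :=
  of fun i j => 1 / (((i : ℕ) + (j : ℕ) + 2) * ((i : ℕ) + (j : ℕ) + 1) : ℝ)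

noncomputable def jacobiMatrix (N : ℕ) : Matrix (Fin N) (Fin N) ℝ :=
  of fun n k => (jacobiCoeff n k : ℝ)

variable {N : ℕ}

theorem momentMatrix_transpose : (momentMatrix N)ᵀ = momentMatrix N := by
  ext i j
  simp only [momentMatrix, transpose_apply, of_apply, add_comm ((i : ℕ) : ℝ)]

theorem jacobiMatrix_apply_eq_zero_of_lt {n k : Fin N} (h : n < k) : jacobiMatrix N n k = 0 := by
  simp [jacobiMatrix, jacobiCoeff_eq_zero_of_lt (Fin.lt_def.mp h)]

theorem jacobiMatrix_isLowerTriangular : (jacobiMatrix N).IsLowerTriangular :=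
  fun _ _ h => jacobiMatrix_apply_eq_zero_of_lt h

theorem isUnit_det_jacobiMatrix : IsUnit (jacobiMatrix N).det := by
  rw [det_of_isLowerTriangular _ jacobiMatrix_isLowerTriangular, isUnit_iff_ne_zero,
    prod_ne_zero_iff]
  intro n _
  simp only [jacobiMatrix, of_apply, jacobiCoeff_self]
  exact_mod_cast (Nat.choose_pos (by omega)).ne'

theorem jacobiMatrix_mul_momentMatrix_apply (n i : Fin N) :
    (jacobiMatrix N * momentMatrix N) n i =
      ∑ k ∈ range (n + 1), (jacobiCoeff n k : ℝ) * (1 / ((k + i + 2) * (k + i + 1))) := by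
  rw [mul_apply]
  simp only [jacobiMatrix, momentMatrix, of_apply]
  rw [Fin.sum_univ_eq_sum_range
    (fun k => (jacobiCoeff n k : ℝ) * (1 / ((k + i + 2) * (k + i + 1))))]
  refine (sum_subset (range_subset_range.mpr n.isLt) fun k _ hk => ?_).symm
  rw [jacobiCoeff_eq_zero_of_lt (by simpa using hk), Int.cast_zero, zero_mul]

theorem jacobiMatrix_mul_momentMatrix_isUpperTriangular :
    (jacobiMatrix N * momentMatrix N).IsUpperTriangular := fun n i h => by
  rw [jacobiMatrix_mul_momentMatrix_apply]
  exact sum_jacobiCoeff_mul_eq_zero_of_lt h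

theorem jacobiMatrix_mul_momentMatrix_mul_transpose :
    jacobiMatrix N * momentMatrix N * (jacobiMatrix N)ᵀ =
      diagonal fun n : Fin N => (2 * ((n : ℕ) + 1) : ℝ)⁻¹ := by
  set M := jacobiMatrix N * momentMatrix N * (jacobiMatrix N)ᵀ
  have hU : M.IsUpperTriangular := jacobiMatrix_mul_momentMatrix_isUpperTriangular.mul
    fun _ _ h => jacobiMatrix_apply_eq_zero_of_lt h
  have hS : M.IsSymm := by
    simp only [M, IsSymm, transpose_mul, transpose_transpose, momentMatrix_transpose,
      Matrix.mul_assoc]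
  rw [← (hU.isDiag_of_isSymm hS).diagonal_diag]
  congr 1
  funext n
  have hsingle : M n n = (jacobiMatrix N * momentMatrix N) n n * jacobiMatrix N n n := by
    refine (mul_apply ..).trans (sum_eq_single n (fun i _ hin => ?_) (by simp))
    rcases hin.lt_or_gt with h | h
    · rw [jacobiMatrix_mul_momentMatrix_isUpperTriangular h, zero_mul]
    · rw [transpose_apply, jacobiMatrix_apply_eq_zero_of_lt h, mul_zero]
  rw [diag_apply, hsingle, jacobiMatrix_mul_momentMatrix_apply, mul_comm]
  exact jacobiCoeff_self_mul_sum_jacobiCoeff_mul_self n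

theorem QN_even_integer_general (N : ℕ) (i j : Fin N) :
    ∃ m : ℤ,
      (Matrix.of fun i j : Fin N =>
        (1 / (((i:ℕ) + (j:ℕ) + 2) * ((i:ℕ) + (j:ℕ) + 1) : ℝ)))⁻¹ i j = 2 * m := by
  change ∃ m : ℤ, (momentMatrix N)⁻¹ i j = 2 * m
  rw [inv_eq_of_mul_mul_eq_diagonal isUnit_det_jacobiMatrix (fun n => by positivity)
    jacobiMatrix_mul_momentMatrix_mul_transpose]
  refine ⟨∑ n : Fin N, ((n : ℕ) + 1 : ℤ) * jacobiCoeff n i * jacobiCoeff n j, ?_⟩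
  rw [mul_apply, Int.cast_sum, mul_sum]
  refine sum_congr rfl fun n _ => ?_
  simp only [mul_diagonal, transpose_apply, Pi.inv_apply, inv_inv, jacobiMatrix, of_apply]
  push_cast
  ring

theorem QN_even_integer (N : ℕ) (hN : 1 ≤ N) (i j : Fin N) :
    ∃ m : ℤ,
      (Matrix.of fun i j : Fin N =>
        (1 / (((i:ℕ) + (j:ℕ) + 2) * ((i:ℕ) + (j:ℕ) + 1) : ℝ)))⁻¹ i j = 2 * m :=
  QN_even_integer_general N i j
end

section
/- Consider the single oscillator system ẋ = y, ẏ = -x + u with the quadratic condition equation (17'): 6T⁻²y² - 24T⁻³xy + 36T⁻⁴x² = 1/6. For each (x,y) ≠ (0,0), there exists a unique T > 0 satisfying this equation. -/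
/-!
In the variable `s = T⁻¹` the left-hand side is the polynomial
`p(s) = 6 s² y² - 24 s³ x y + 36 s⁴ x²`, with `p(0) = 0` and
`p'(s) = 12 s ((y - 3 s x)² + 3 s² x²) > 0` for `s > 0`. Since the quadratic form
`6 y² - 24 y t + 36 t²` dominates `y² + t²`, `p(s) ≥ s² (x² + y²)` for `s ≥ 1`, so `p`
increases strictly from `0` to `∞` on `[0, ∞)` and takes each positive value exactly once.
-/

open Set Filter

theorem sq_add_sq_pos_of_ne_zero {x y : ℝ} (h : (x, y) ≠ (0, 0)) : 0 < x ^ 2 + y ^ 2 := by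
  by_contra! hr
  exact h (Prod.ext (by nlinarith [sq_nonneg x, sq_nonneg y])
    (by nlinarith [sq_nonneg x, sq_nonneg y]))

def oscillatorPoly (x y s : ℝ) : ℝ :=
  6 * s ^ 2 * y ^ 2 - 24 * s ^ 3 * x * y + 36 * s ^ 4 * x ^ 2

namespace oscillatorPoly

variable {x y : ℝ}

theorem continuous (x y : ℝ) : Continuous (oscillatorPoly x y) := by
  unfold oscillatorPoly
  fun_prop

theorem zero_right (x y : ℝ) : oscillatorPoly x y 0 = 0 := by
  simp [oscillatorPoly]

theorem hasDerivAt (x y s : ℝ) :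
    HasDerivAt (oscillatorPoly x y) (12 * s * ((y - 3 * s * x) ^ 2 + 3 * s ^ 2 * x ^ 2)) s :=
  (((((hasDerivAt_pow 2 s).const_mul 6).mul_const (y ^ 2)).sub
    ((((hasDerivAt_pow 3 s).const_mul 24).mul_const x).mul_const y)).add
    (((hasDerivAt_pow 4 s).const_mul 36).mul_const (x ^ 2))).congr_deriv (by push_cast; ring)

theorem deriv_pos (h : (x, y) ≠ (0, 0)) {s : ℝ} (hs : 0 < s) :
    0 < deriv (oscillatorPoly x y) s := by
  rw [(hasDerivAt x y s).deriv]
  have hq : 0 < (y - 3 * s * x) ^ 2 + 3 * s ^ 2 * x ^ 2 := by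
    rcases eq_or_ne x 0 with rfl | hx
    · have hy : y ≠ 0 := fun hy => h (by rw [hy])
      simpa using sq_pos_of_ne_zero hy
    · have := sq_nonneg (y - 3 * s * x)
      positivity
  positivity

theorem strictMonoOn (h : (x, y) ≠ (0, 0)) : StrictMonoOn (oscillatorPoly x y) (Ici 0) :=
  strictMonoOn_of_deriv_pos (convex_Ici 0) (continuous x y).continuousOn fun s hs =>
    deriv_pos h (by rwa [interior_Ici] at hs)

theorem sq_mul_le (x y : ℝ) {s : ℝ} (hs : 1 ≤ s) :
    s ^ 2 * (x ^ 2 + y ^ 2) ≤ oscillatorPoly x y s := by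
  have hform : s ^ 2 * (y ^ 2 + (s * x) ^ 2) ≤ oscillatorPoly x y s := by
    have : 0 ≤ s ^ 2 * (5 * (y - 12 / 5 * (s * x)) ^ 2 + 31 / 5 * (s * x) ^ 2) := by positivity
    unfold oscillatorPoly
    nlinarith
  have : x ^ 2 ≤ (s * x) ^ 2 := by
    rw [mul_pow]
    exact le_mul_of_one_le_left (sq_nonneg x) (one_le_pow₀ hs)
  nlinarith [sq_nonneg s]

theorem tendsto_atTop (h : (x, y) ≠ (0, 0)) : Tendsto (oscillatorPoly x y) atTop atTop := by
  refine tendsto_atTop_mono' atTop ?_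
    ((tendsto_pow_atTop two_ne_zero).atTop_mul_const (sq_add_sq_pos_of_ne_zero h))
  filter_upwards [eventually_ge_atTop 1] with s hs using sq_mul_le x y hs

theorem existsUnique_pos_eq (h : (x, y) ≠ (0, 0)) {c : ℝ} (hc : 0 < c) :
    ∃! s, 0 < s ∧ oscillatorPoly x y s = c := by
  obtain ⟨s, hs, hsc⟩ := intermediate_value_Ici (continuous x y).continuousOn (tendsto_atTop h)
    (show oscillatorPoly x y 0 ≤ c by rw [zero_right]; exact hc.le)
  have hs_pos : 0 < s := hs.lt_of_ne (by rintro rfl; rw [zero_right] at hsc; exact hc.ne hsc)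
  refine ⟨s, ⟨hs_pos, hsc⟩, fun t ⟨ht, htc⟩ => ?_⟩
  exact (strictMonoOn h).injOn ht.le hs (htc.trans hsc.symm)

end oscillatorPoly

theorem unique_time_single_oscillator (x y : ℝ) (h : (x, y) ≠ (0, 0)) :
    ∃! T : ℝ, 0 < T ∧
      6 * T⁻¹ ^ 2 * y ^ 2 - 24 * T⁻¹ ^ 3 * x * y + 36 * T⁻¹ ^ 4 * x ^ 2 = 1 / 6 := by
  obtain ⟨s, ⟨hs, hsc⟩, huniq⟩ :=
    oscillatorPoly.existsUnique_pos_eq h (by norm_num : (0 : ℝ) < 1 / 6)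
  refine ⟨s⁻¹, ⟨inv_pos.2 hs, ?_⟩, fun T ⟨hT, hTc⟩ => ?_⟩
  · change oscillatorPoly x y s⁻¹⁻¹ = 1 / 6
    rwa [inv_inv]
  · rw [← inv_inv T, huniq T⁻¹ ⟨inv_pos.2 hT, hTc⟩]
end

section
/- Let A be the 2N×2N block-diagonal matrix with blocks [[0,1],[-ωᵢ²,0]] and B = (0,1,0,1,…,0,1)ᵀ. If the frequencies ω₁,…,ω_N are positive and pairwise distinct, then the pair (A,B) satisfies the Kalman controllability condition: the vectors B, AB, A²B, …, A^{2N-1}B span ℝ^{2N}. -/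
/-!
Write a vector of `ℝ^{2N}` as `interleave (u, v)`, with `u` on the even and `v` on the odd
coordinates. Then `A` acts by `(u, v) ↦ (v, d • u)` with `d = -ω²`, and `B = (0, 1)`, so
`A^{2j} B = (0, d^j)` and `A^{2j+1} B = (d^j, 0)`. For `j < N` the vectors `d^j` are the columns
of the Vandermonde matrix of `d`, which is invertible because the `ωᵢ > 0` have distinct squares.
-/

open Matrix

/-- Block-diagonal system matrix with 2×2 blocks [[0,1],[-ωᵢ²,0]]. -/
noncomputable def oscMatrix (N : ℕ) (ω : Fin N → ℝ) :
    Matrix (Fin (2 * N)) (Fin (2 * N)) ℝ :=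
  Matrix.of fun i j =>
    if (i : ℕ) % 2 = 0 then
      (if (j : ℕ) = (i : ℕ) + 1 then 1 else 0)
    else
      (if (j : ℕ) + 1 = (i : ℕ) then -(ω ⟨(i : ℕ) / 2, by omega⟩) ^ 2 else 0)

/-- Control vector B = (0,1,0,1,…,0,1)ᵀ. -/
def oscB (N : ℕ) : Fin (2 * N) → ℝ :=
  fun i => if (i : ℕ) % 2 = 1 then 1 else 0

open Submodule LinearMap

theorem span_range_pow_eq_top_of_injective {K : Type*} [Field K] {n : ℕ} {x : Fin n → K}
    (hx : Function.Injective x) :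
    span K (Set.range fun j : Fin n => fun m => x m ^ (j : ℕ)) = ⊤ := by
  have hdet : IsUnit (vandermonde x).det :=
    isUnit_iff_ne_zero.2 (det_vandermonde_ne_zero_iff.2 hx)
  have hli : LinearIndependent K (vandermonde x).col :=
    linearIndependent_cols_iff_isUnit.2 ((Matrix.isUnit_iff_isUnit_det _).2 hdet)
  exact hli.span_eq_top_of_card_eq_finrank' (by simp)

theorem Fin.exists_eq_two_mul_or_two_mul_add_one {N : ℕ} (i : Fin (2 * N)) :
    ∃ m : Fin N, i = ⟨2 * m, by omega⟩ ∨ i = ⟨2 * m + 1, by omega⟩ :=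
  ⟨⟨i / 2, by omega⟩, by
    rcases Nat.even_or_odd' i with ⟨k, h | h⟩ <;> simp only [Fin.ext_iff] <;> omega⟩

section Interleave

variable {R : Type*} [Semiring R] {N : ℕ}

def interleave : (Fin N → R) × (Fin N → R) →ₗ[R] Fin (2 * N) → R where
  toFun uv i := if (i : ℕ) % 2 = 0 then uv.1 ⟨i / 2, by omega⟩ else uv.2 ⟨i / 2, by omega⟩
  map_add' _ _ := by
    ext i; dsimp only [Pi.add_apply, Prod.fst_add, Prod.snd_add]; split_ifs <;> rfl
  map_smul' _ _ := by
    ext i; dsimp only [Pi.smul_apply, Prod.smul_fst, Prod.smul_snd]; split_ifs <;> rfl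

@[simp]
theorem interleave_apply_two_mul (uv : (Fin N → R) × (Fin N → R)) (m : Fin N) :
    interleave uv ⟨2 * m, by omega⟩ = uv.1 m := by
  simp [interleave]

@[simp]
theorem interleave_apply_two_mul_add_one (uv : (Fin N → R) × (Fin N → R)) (m : Fin N) :
    interleave uv ⟨2 * m + 1, by omega⟩ = uv.2 m := by
  simp [interleave, Nat.add_div]

theorem interleave_surjective :
    Function.Surjective (interleave : _ →ₗ[R] Fin (2 * N) → R) := by
  intro x
  refine ⟨(fun m => x ⟨2 * m, by omega⟩, fun m => x ⟨2 * m + 1, by omega⟩),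
    funext fun i => ?_⟩
  obtain ⟨m, rfl | rfl⟩ := i.exists_eq_two_mul_or_two_mul_add_one <;> simp

end Interleave

theorem oscB_eq_interleave (N : ℕ) : oscB N = interleave (0, 1) := by
  ext i
  obtain ⟨m, rfl | rfl⟩ := i.exists_eq_two_mul_or_two_mul_add_one <;> simp [oscB]

section OscMatrix
variable {N : ℕ} (ω : Fin N → ℝ) (x : Fin (2 * N) → ℝ) (m : Fin N)

theorem oscMatrix_mulVec_apply_two_mul :
    (oscMatrix N ω *ᵥ x) ⟨2 * m, by omega⟩ = x ⟨2 * m + 1, by omega⟩ := by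
  rw [mulVec, dotProduct, Fintype.sum_eq_single ⟨2 * m + 1, by omega⟩]
  · simp [oscMatrix]
  · intro j hj
    rw [Fin.ne_iff_vne] at hj
    simp [oscMatrix, hj]

theorem oscMatrix_mulVec_apply_two_mul_add_one :
    (oscMatrix N ω *ᵥ x) ⟨2 * m + 1, by omega⟩ = -ω m ^ 2 * x ⟨2 * m, by omega⟩ := by
  rw [mulVec, dotProduct, Fintype.sum_eq_single ⟨2 * m, by omega⟩]
  · simp [oscMatrix, Nat.add_div]
  · intro j hj
    rw [Fin.ne_iff_vne] at hj
    simp [oscMatrix, hj]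

theorem oscMatrix_mulVec_interleave (u v : Fin N → ℝ) :
    oscMatrix N ω *ᵥ interleave (u, v) = interleave (v, fun m => -ω m ^ 2 * u m) := by
  ext i
  obtain ⟨m, rfl | rfl⟩ := i.exists_eq_two_mul_or_two_mul_add_one
  · rw [oscMatrix_mulVec_apply_two_mul, interleave_apply_two_mul_add_one,
      interleave_apply_two_mul]
  · rw [oscMatrix_mulVec_apply_two_mul_add_one, interleave_apply_two_mul,
      interleave_apply_two_mul_add_one]

theorem oscMatrix_pow_two_mul_mulVec_oscB (j : ℕ) :
    (oscMatrix N ω ^ (2 * j)) *ᵥ oscB N = interleave (0, fun m => (-ω m ^ 2) ^ j) := by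
  induction j with
  | zero =>
    simp only [mul_zero, pow_zero, one_mulVec, oscB_eq_interleave]
    rfl
  | succ j ih =>
    rw [mul_add_one, add_comm, pow_add, sq, ← mulVec_mulVec, ← mulVec_mulVec, ih,
      oscMatrix_mulVec_interleave, oscMatrix_mulVec_interleave]
    simp only [Pi.zero_apply, mul_zero, ← pow_succ']
    rfl

theorem oscMatrix_pow_two_mul_add_one_mulVec_oscB (j : ℕ) :
    (oscMatrix N ω ^ (2 * j + 1)) *ᵥ oscB N = interleave (fun m => (-ω m ^ 2) ^ j, 0) := by
  rw [pow_succ', ← mulVec_mulVec, oscMatrix_pow_two_mul_mulVec_oscB, oscMatrix_mulVec_interleave]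
  simp only [Pi.zero_apply, mul_zero]
  rfl

end OscMatrix

theorem kalman_controllability_general (N : ℕ) (ω : Fin N → ℝ)
    (hpos : ∀ i, 0 < ω i) (hdist : Function.Injective ω) :
    Submodule.span ℝ
      (Set.range fun k : Fin (2 * N) => ((oscMatrix N ω) ^ (k : ℕ)).mulVec (oscB N)) = ⊤ := by
  set S := Set.range fun k : Fin (2 * N) => ((oscMatrix N ω) ^ (k : ℕ)).mulVec (oscB N)
  set P := Set.range fun j : Fin N => fun m => (-ω m ^ 2) ^ (j : ℕ)
  have hinj : Function.Injective fun m => -ω m ^ 2 := fun a b h =>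
    hdist ((sq_eq_sq₀ (hpos a).le (hpos b).le).1 (neg_inj.1 h))
  have hsub : interleave '' (inl ℝ _ _ '' P ∪ inr ℝ _ _ '' P) ⊆ S := by
    rintro _ ⟨_, ⟨_, ⟨j, rfl⟩, rfl⟩ | ⟨_, ⟨j, rfl⟩, rfl⟩, rfl⟩
    · exact ⟨⟨2 * j + 1, by omega⟩, oscMatrix_pow_two_mul_add_one_mulVec_oscB ω j⟩
    · exact ⟨⟨2 * j, by omega⟩, oscMatrix_pow_two_mul_mulVec_oscB ω j⟩
  refine eq_top_mono (span_mono hsub) ?_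
  rw [span_image, span_inl_union_inr, span_range_pow_eq_top_of_injective hinj, prod_top,
    Submodule.map_top, range_eq_top.2 interleave_surjective]

theorem kalman_controllability (N : ℕ) (hN : 1 ≤ N) (ω : Fin N → ℝ)
    (hpos : ∀ i, 0 < ω i) (hdist : Function.Injective ω) :
    Submodule.span ℝ
      (Set.range fun k : Fin (2 * N) => ((oscMatrix N ω) ^ (k : ℕ)).mulVec (oscB N)) = ⊤ :=
  kalman_controllability_general N ω hpos hdist
end
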